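/- Let G = (V,E) be a graph on V = {1,...,n} and α a permutation of V. Then αG equals the complement of G if and only if for every cycle z in the disjoint cycle decomposition of the induced pair permutation α', and every element e of z, exactly one of e and z(e) belongs to E. -/

import Mathlib

set_option linter.unusedVariables false

/-- The position `p_{ij}` of the pair `{i,j}` (1-based labels `i<j` in `{1,...,n}`),
namely `(2n-i)(i-1)/2 + (j-i)`, expressed on `Sym2 (Fin n)` (vertex `a : Fin n`
carries the label `a+1`). -/
def pairIndex (n : Nat) (e : Sym2 (Fin n)) : Nat :=
  Sym2.lift ⟨fun a b =>
      (2 * n - (min a.val b.val + 1)) * (min a.val b.val) / 2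
        + (max a.val b.val - min a.val b.val),
    fun a b => by simp [min_comm, max_comm]⟩ e

open scoped Classical in
/-- The index `N(G) = Σ_{ij ∈ E(G)} 2^(λ - p_ij)` of a labelled graph, `λ = C(n,2)`. -/
noncomputable def graphIndex (n : Nat) (G : SimpleGraph (Fin n)) : Nat :=
  ∑ e ∈ G.edgeSet.toFinset, 2 ^ (n.choose 2 - pairIndex n e)

/-- The pair permutation `α'` induced on `Sym2 (Fin n)` by `α'{i,j} = {αi,αj}`. -/
def pairPerm {n : Nat} (α : Equiv.Perm (Fin n)) : Equiv.Perm (Sym2 (Fin n)) where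
  toFun := Sym2.map α
  invFun := Sym2.map α.symm
  left_inv e := by induction e using Sym2.ind with | _ a b => simp
  right_inv e := by induction e using Sym2.ind with | _ a b => simp

/-- The relabelled graph `αG`, whose edge set is `{{αi,αj} : {i,j} ∈ E(G)}`. -/
def mapGraph {n : Nat} (α : Equiv.Perm (Fin n)) (G : SimpleGraph (Fin n)) :
    SimpleGraph (Fin n) where
  Adj a b := G.Adj (α.symm a) (α.symm b)
  symm.symm a b h := G.symm.symm _ _ h
  loopless.irrefl a h := G.loopless.irrefl _ h

namespace SimpleGraph

variable {V : Type*}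

theorem eq_compl_iff_adj {G H : SimpleGraph V} :
    H = Gᶜ ↔ ∀ a b, a ≠ b → (H.Adj a b ↔ ¬ G.Adj a b) := by
  refine ⟨fun h a b hab => by simp [h, hab], fun h => ?_⟩
  ext a b
  by_cases hab : a = b
  · simp [hab]
  · simp [h a b hab, hab]

theorem comap_symm_eq_compl_iff (G : SimpleGraph V) (f : V ≃ V) :
    G.comap f.symm = Gᶜ ↔
      ∀ e : Sym2 V, ¬ e.IsDiag → Xor (e ∈ G.edgeSet) (e.map f ∈ G.edgeSet) := by
  rw [eq_compl_iff_adj, f.symm.forall_congr_left]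
  simp only [Sym2.forall, f.symm.forall_congr_left (p := fun b => _ ≠ b → _)]
  simp [xor_iff_iff_not, iff_not_comm]

end SimpleGraph

/-- `αG = Gᶜ` iff for every cycle `z` of the induced pair permutation `α'` and
every element `e` of `z`, exactly one of `e` and `z(e) = α' e` is an edge of `G`. -/
theorem stmt4 (n : Nat) (G : SimpleGraph (Fin n)) (α : Equiv.Perm (Fin n)) :
    mapGraph α G = Gᶜ ↔
      ∀ e : Sym2 (Fin n), ¬ e.IsDiag →
        Xor' (e ∈ G.edgeSet) (pairPerm α e ∈ G.edgeSet) :=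
  -- `mapGraph α G` is `G.comap α.symm` and `pairPerm α` is `Sym2.map α` definitionally.
  G.comap_symm_eq_compl_iff α
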